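/- arXiv:1208.5620 — 2 statements merged into one kernel-verified Lean document; each statement's English description precedes it below -/
import Mathlib

section
/- Let G be a simple graph on a vertex type V, let f be a natural number, and let B ⊆ V be a finite set with |B| ≤ f. Let C = V \ B. Suppose that for every pair of distinct vertices u, v ∈ C there exist 2f+1 pairwise internally vertex-disjoint u–v paths in G. Then the induced subgraph of G on C is preconnected: every two vertices of C are joined by a path of G all of whose vertices lie in C. -/
/-- A family of `u`–`v` walks is pairwise internally vertex-disjoint if any two
distinct members share no vertices other than the endpoints `u` and `v`. -/
def PairwiseInternallyDisjoint {V : Type*} {G : SimpleGraph V} {u v : V} {ι : Type*}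
    (P : ι → G.Walk u v) : Prop :=
  ∀ i j, i ≠ j → ∀ x, x ∈ (P i).support → x ∈ (P j).support → x = u ∨ x = v

/-- A walk whose support lies in `s` yields reachability in the induced subgraph. -/
lemma reachable_induce_of_walk {V : Type*} (G : SimpleGraph V) (s : Set V) :
    ∀ {u v : V} (p : G.Walk u v), (∀ x ∈ p.support, x ∈ s) →
      ∀ (hu : u ∈ s) (hv : v ∈ s),
        (SimpleGraph.induce s G).Reachable ⟨u, hu⟩ ⟨v, hv⟩ := by
  intro u v p
  induction p with
  | nil => intro _ hu hv; rfl
  | cons h q ih =>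
    intro hsupp hu hv
    have hw := hsupp _ (List.mem_cons_of_mem _ q.start_mem_support)
    have hq : ∀ x ∈ q.support, x ∈ s := fun x hx =>
      hsupp x (by simp [SimpleGraph.Walk.support_cons, hx])
    exact (SimpleGraph.Adj.reachable
      (by exact h : (SimpleGraph.induce s G).Adj ⟨_, hu⟩ ⟨_, hw⟩)).trans (ih hq hw hv)

/-- If between every pair of distinct correct vertices (vertices outside the
Byzantine set `B`, `|B| ≤ f`) there are `2f+1` pairwise internally
vertex-disjoint paths, then the subgraph induced on the correct vertices
`C = V \ B` is preconnected. -/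
theorem correct_graph_preconnected {V : Type*} (G : SimpleGraph V)
    (f : ℕ) (B : Finset V) (hB : B.card ≤ f)
    (hpaths : ∀ u v : V, u ∉ B → v ∉ B → u ≠ v →
      ∃ P : Fin (2 * f + 1) → G.Walk u v,
        (∀ i, (P i).IsPath) ∧ PairwiseInternallyDisjoint P) :
    (SimpleGraph.induce ((↑B : Set V)ᶜ) G).Preconnected := by
  classical
  rintro ⟨u, hu⟩ ⟨v, hv⟩
  simp only [Set.mem_compl_iff, Finset.mem_coe] at hu hv
  by_cases huv : u = v
  · subst huv; rfl
  obtain ⟨P, _hpath, hdisj⟩ := hpaths u v hu hv huv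
  set bad : Finset (Fin (2 * f + 1)) :=
    Finset.univ.filter (fun i => ∃ b ∈ B, b ∈ (P i).support) with hbad
  have hcard : bad.card ≤ B.card := by
    apply Finset.card_le_card_of_injOn
      (fun i => if h : ∃ b ∈ B, b ∈ (P i).support then Classical.choose h else u)
    · intro i hi
      have h := (Finset.mem_filter.mp hi).2
      simp only [dif_pos h]
      exact (Classical.choose_spec h).1
    · intro i hi j hj hij
      have hiB := (Finset.mem_filter.mp (Finset.mem_coe.mp hi)).2
      have hjB := (Finset.mem_filter.mp (Finset.mem_coe.mp hj)).2
      simp only [dif_pos hiB, dif_pos hjB] at hij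
      by_contra hne
      have hbi := Classical.choose_spec hiB
      have hbj := Classical.choose_spec hjB
      rcases hdisj i j hne _ hbi.2 (hij ▸ hbj.2) with h | h
      · exact hu (h ▸ hbi.1)
      · exact hv (h ▸ hbi.1)
  have hex : ∃ i, i ∉ bad := by
    by_contra h
    push_neg at h
    have : bad = Finset.univ := Finset.eq_univ_iff_forall.mpr h
    have hcu : bad.card = 2 * f + 1 := by simp [this]
    omega
  obtain ⟨i, hi⟩ := hex
  have hsupp : ∀ x ∈ (P i).support, x ∈ ((↑B : Set V)ᶜ) := by
    intro x hx
    simp only [Set.mem_compl_iff, Finset.mem_coe]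
    intro hxB
    exact hi (Finset.mem_filter.mpr ⟨Finset.mem_univ i, ⟨x, hxB, hx⟩⟩)
  exact reachable_induce_of_walk G _ (P i) hsupp
    (by simpa using hu) (by simpa using hv)
end

section
/- Let G be a simple graph on a vertex type V, let u and v be distinct vertices, let f be a natural number, and let B ⊆ V be a finite set with |B| ≤ f, u ∉ B, and v ∉ B. If there exist 2f+1 pairwise internally vertex-disjoint u–v paths in G, then the induced subgraph of G on V \ B contains at least f+1 pairwise internally vertex-disjoint paths between u and v. -/
open Finset

namespace SimpleGraph.Walk

variable {V : Type*} {G : SimpleGraph V} {s : Set V} {u v : V}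

lemma mem_support_induce (w : G.Walk u v) (hw : ∀ x ∈ w.support, x ∈ s) (x : s) :
    x ∈ (w.induce s hw).support ↔ (x : V) ∈ w.support := by
  simp [support_induce]

lemma IsPath.induce {w : G.Walk u v} (hp : w.IsPath) (hw : ∀ x ∈ w.support, x ∈ s) :
    (w.induce s hw).IsPath := by
  rwa [← isPath_map_iff_of_injective (f := (Embedding.induce s).toHom) Subtype.val_injective,
    map_induce]

end SimpleGraph.Walk

namespace PairwiseInternallyDisjoint

variable {V ι : Type*} {G : SimpleGraph V} {u v : V} {P : ι → G.Walk u v}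

lemma comp_injective (hP : PairwiseInternallyDisjoint P) {κ : Type*} {e : κ → ι}
    (he : e.Injective) : PairwiseInternallyDisjoint (P ∘ e) :=
  fun i j hij => hP (e i) (e j) (he.ne hij)

lemma induce (hP : PairwiseInternallyDisjoint P) {s : Set V} (hu : u ∈ s) (hv : v ∈ s)
    (hs : ∀ i, ∀ x ∈ (P i).support, x ∈ s) :
    PairwiseInternallyDisjoint (G := G.induce s) (u := ⟨u, hu⟩) (v := ⟨v, hv⟩)
      fun i => (P i).induce s (hs i) := by
  intro i j hij x hxi hxj
  rw [SimpleGraph.Walk.mem_support_induce] at hxi hxj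
  simpa [Subtype.ext_iff] using hP i j hij x hxi hxj

variable [Fintype ι] [DecidableEq V] {B : Finset V}

lemma card_filter_exists_mem_support_le (hP : PairwiseInternallyDisjoint P) (huB : u ∉ B) (hvB : v ∉ B) :
    #{i | ∃ x ∈ B, x ∈ (P i).support} ≤ #B := by
  refine card_le_card_of_forall_subsingleton (fun i x => x ∈ (P i).support)
    (fun i hi => by simpa using (mem_filter.1 hi).2) fun x hx i hi j hj => ?_
  by_contra hij
  rcases hP i j hij x hi.2 hj.2 with rfl | rfl
  exacts [huB hx, hvB hx]

lemma exists_fin_embedding_avoiding (hP : PairwiseInternallyDisjoint P) (huB : u ∉ B)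
    (hvB : v ∉ B) {k : ℕ} (hk : k + #B ≤ Fintype.card ι) :
    ∃ e : Fin k ↪ ι, ∀ i, ∀ x ∈ (P (e i)).support, x ∉ B := by
  set T : Finset ι := {i | ¬∃ x ∈ B, x ∈ (P i).support}
  have hT : k ≤ #T := by
    have hsplit : #{i | ∃ x ∈ B, x ∈ (P i).support} + #T = Fintype.card ι :=
      card_filter_add_card_filter_not _
    have := hP.card_filter_exists_mem_support_le huB hvB
    omega
  obtain ⟨e⟩ := Function.Embedding.nonempty_of_card_le (α := Fin k) (β := T) (by simpa using hT)
  exact ⟨e.trans (Function.Embedding.subtype _),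
    fun i x hx hxB => (mem_filter.1 (e i).2).2 ⟨x, hxB, hx⟩⟩

end PairwiseInternallyDisjoint

/-- If there are `2f+1` pairwise internally vertex-disjoint `u`–`v` paths in `G`
and `B` is a set of at most `f` vertices avoiding `u` and `v`, then the subgraph
induced on `V \ B` contains at least `f+1` pairwise internally vertex-disjoint
paths between `u` and `v`. -/
theorem disjoint_paths_avoiding_byzantine {V : Type*} (G : SimpleGraph V)
    (u v : V) (f : ℕ) (B : Finset V) (hB : B.card ≤ f)
    (huB : u ∉ B) (hvB : v ∉ B)
    (h : ∃ P : Fin (2 * f + 1) → G.Walk u v,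
      (∀ i, (P i).IsPath) ∧ PairwiseInternallyDisjoint P) :
    ∃ Q : Fin (f + 1) →
        (SimpleGraph.induce ((↑B : Set V)ᶜ) G).Walk
          ⟨u, by simpa using huB⟩ ⟨v, by simpa using hvB⟩,
      (∀ i, (Q i).IsPath) ∧ PairwiseInternallyDisjoint Q := by
  classical
  obtain ⟨P, hpath, hdisj⟩ := h
  obtain ⟨e, he⟩ := hdisj.exists_fin_embedding_avoiding huB hvB (k := f + 1)
    (by rw [Fintype.card_fin]; omega)
  exact ⟨fun i => (P (e i)).induce _ (he i), fun i => (hpath _).induce _,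
    (hdisj.comp_injective e.injective).induce _ _ he⟩
end
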